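/- arXiv:1707.08836 — 9 statements merged into one kernel-verified Lean document; each statement's English description precedes it below -/
import Mathlib

section
/- A linear endomorphism d of J is a derivation (i.e., d(x∘y) = d(x)∘y + x∘d(y) for all x, y ∈ J) if and only if the image of d is contained in the subspace J_1 = {(a,v) ∈ J : a = 0} (the span of n_1, …, n_m). -/
/-- The "marginal" Jordan algebra `J = ℂ × (Fin m → ℂ)` with multiplication
`(a,v)∘(b,w) = (a·b, (1/2)·(a·w + b·v))`; i.e. with basis `e, n_1, …, n_m`,
`e∘e = e`, `e∘n_i = (1/2)n_i`, `n_i∘n_j = 0`, where `e = (1,0)`. -/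
noncomputable def jmul (m : ℕ) (x y : ℂ × (Fin m → ℂ)) : ℂ × (Fin m → ℂ) :=
  (x.1 * y.1, (1 / 2 : ℂ) • (x.1 • y.2 + y.1 • x.2))

lemma jmul_eq (m : ℕ) (x y : ℂ × (Fin m → ℂ)) :
    jmul m x y = (1 / 2 : ℂ) • (x.1 • y + y.1 • x) := by
  apply Prod.ext
  · simp [jmul]; ring
  · simp [jmul]

/-- A linear endomorphism of `J` is a derivation iff its image lies in
`J₁ = {(a,v) : a = 0}`, the span of `n_1, …, n_m`. -/
theorem deriv_iff_image_in_J1 (m : ℕ) (hm : 1 ≤ m)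
    (d : (ℂ × (Fin m → ℂ)) →ₗ[ℂ] (ℂ × (Fin m → ℂ))) :
    (∀ x y : ℂ × (Fin m → ℂ), d (jmul m x y) = jmul m (d x) y + jmul m x (d y)) ↔
    (∀ x : ℂ × (Fin m → ℂ), (d x).1 = 0) := by
  set e : ℂ × (Fin m → ℂ) := (1, 0) with he
  constructor
  · intro h
    have gen : ∀ x : ℂ × (Fin m → ℂ), (d x).1 + x.1 * (d e).1 = 0 := by
      intro x
      have hx := congrArg Prod.fst (h x e)
      simp only [jmul_eq, map_smul, map_add, Prod.smul_fst, Prod.fst_add,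
        smul_eq_mul, he] at hx
      linear_combination -2 * hx
    have he1 : (d e).1 = 0 := by
      have := gen e
      simp only [he, one_mul] at this
      linear_combination this / 2
    intro x
    have := gen x
    rw [he1, mul_zero, add_zero] at this
    exact this
  · intro h x y
    rw [jmul_eq, jmul_eq, jmul_eq, map_smul, map_add, map_smul, map_smul, h x, h y]
    simp only [zero_smul, zero_add, add_zero, smul_add]
    exact add_comm _ _
end

section
/- The space of derivations of J, i.e., the linear subspace {d ∈ End_ℂ(J) : d(x∘y) = d(x)∘y + x∘d(y) for all x, y ∈ J} of the endomorphism algebra of J, has dimension k² − k = (m+1)·m over ℂ. -/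
/-!
Evaluating the Leibniz rule at `(e, e)` and `(x, e)` and projecting to the `ℂ`-component shows
that a derivation `d` takes values in the nilpotent ideal `0 × ℂᵐ`. Conversely, since
`x ∘ y = (y₁/2) x + (x₁/2) y` and `n ∘ y = (y₁/2) n` for `n` in that ideal, every linear map
into the ideal is a derivation. So the derivations are the kernel of the surjection
`d ↦ fst ∘ d` from `End(J)` onto `J*`, of dimension `(m+1)² - (m+1)`.
-/

section LinearAlgebra

variable {K M N P : Type*} [Field K] [AddCommGroup M] [Module K M] [AddCommGroup N]
  [Module K N] [AddCommGroup P] [Module K P]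

theorem LinearMap.compRight_fst_surjective :
    Function.Surjective (LinearMap.compRight (M := M) K (LinearMap.fst K N P)) :=
  fun g => ⟨(LinearMap.inl K N P).comp g, rfl⟩

theorem LinearMap.finrank_ker_compRight_fst [FiniteDimensional K M] [FiniteDimensional K N]
    [FiniteDimensional K P] :
    Module.finrank K (LinearMap.ker (LinearMap.compRight (M := M) K (LinearMap.fst K N P))) =
      Module.finrank K M * Module.finrank K P := by
  have h := LinearMap.finrank_range_add_finrank_ker
    (LinearMap.compRight (M := M) K (LinearMap.fst K N P))
  rw [LinearMap.range_eq_top.mpr LinearMap.compRight_fst_surjective, finrank_top,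
    Module.finrank_linearMap, Module.finrank_linearMap, Module.finrank_prod, mul_add] at h
  omega

end LinearAlgebra

section Derivations

variable {m : ℕ}

@[simp]
theorem jmul_fst (x y : ℂ × (Fin m → ℂ)) : (jmul m x y).1 = x.1 * y.1 := rfl

theorem jmul_eq_smul_add_smul (x y : ℂ × (Fin m → ℂ)) :
    jmul m x y = ((1 / 2 : ℂ) * y.1) • x + ((1 / 2 : ℂ) * x.1) • y := by
  ext i
  · simp only [jmul_fst, Prod.fst_add, Prod.smul_fst, smul_eq_mul]
    ring
  · simp only [jmul, Prod.snd_add, Prod.smul_snd, Pi.add_apply, Pi.smul_apply, smul_eq_mul]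
    ring

theorem fst_apply_eq_zero_of_leibniz (d : (ℂ × (Fin m → ℂ)) →ₗ[ℂ] (ℂ × (Fin m → ℂ)))
    (hd : ∀ x y, d (jmul m x y) = jmul m (d x) y + jmul m x (d y)) (x : ℂ × (Fin m → ℂ)) :
    (d x).1 = 0 := by
  set e : ℂ × (Fin m → ℂ) := (1, 0)
  have hxe : jmul m x e = (1 / 2 : ℂ) • x + ((1 / 2 : ℂ) * x.1) • e := by
    simp [jmul_eq_smul_add_smul, e]
  have hde : (d e).1 = 0 := by
    have h := congrArg Prod.fst (hd e e)
    have hee : jmul m e e = e := by simp [jmul, e]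
    simp only [hee, Prod.fst_add, jmul_fst, e] at h
    linear_combination -h
  have h := congrArg Prod.fst (hd x e)
  simp only [hxe, map_add, map_smul, Prod.fst_add, Prod.smul_fst, jmul_fst, smul_eq_mul,
    hde] at h
  simp only [e, mul_one, mul_zero] at h
  linear_combination -2 * h

theorem leibniz_of_fst_apply_eq_zero (d : (ℂ × (Fin m → ℂ)) →ₗ[ℂ] (ℂ × (Fin m → ℂ)))
    (hd : ∀ x, (d x).1 = 0) (x y : ℂ × (Fin m → ℂ)) :
    d (jmul m x y) = jmul m (d x) y + jmul m x (d y) := by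
  rw [jmul_eq_smul_add_smul, map_add, map_smul, map_smul, jmul_eq_smul_add_smul (d x),
    jmul_eq_smul_add_smul x (d y), hd x, hd y]
  module

theorem leibniz_iff_compRight_fst_eq_zero (d : (ℂ × (Fin m → ℂ)) →ₗ[ℂ] (ℂ × (Fin m → ℂ))) :
    (∀ x y, d (jmul m x y) = jmul m (d x) y + jmul m x (d y)) ↔
      LinearMap.compRight ℂ (LinearMap.fst ℂ ℂ (Fin m → ℂ)) d = 0 :=
  ⟨fun hd => LinearMap.ext (fst_apply_eq_zero_of_leibniz d hd),
    fun hd => leibniz_of_fst_apply_eq_zero d (LinearMap.congr_fun hd)⟩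

end Derivations

theorem finrank_derivations_general (m : ℕ)
    (D : Submodule ℂ ((ℂ × (Fin m → ℂ)) →ₗ[ℂ] (ℂ × (Fin m → ℂ))))
    (hD : ∀ d, d ∈ D ↔
      ∀ x y : ℂ × (Fin m → ℂ), d (jmul m x y) = jmul m (d x) y + jmul m x (d y)) :
    Module.finrank ℂ D = (m + 1) * m := by
  have hker : D = LinearMap.ker (LinearMap.compRight ℂ (LinearMap.fst ℂ ℂ (Fin m → ℂ))) := by
    ext d
    rw [hD, LinearMap.mem_ker, leibniz_iff_compRight_fst_eq_zero]
  rw [hker, LinearMap.finrank_ker_compRight_fst, Module.finrank_prod]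
  simp [add_comm]

/-- The space of derivations of `J` has dimension `k² - k = (m+1)·m` over `ℂ`. -/
theorem finrank_derivations (m : ℕ) (hm : 1 ≤ m)
    (D : Submodule ℂ ((ℂ × (Fin m → ℂ)) →ₗ[ℂ] (ℂ × (Fin m → ℂ))))
    (hD : ∀ d, d ∈ D ↔
      ∀ x y : ℂ × (Fin m → ℂ), d (jmul m x y) = jmul m (d x) y + jmul m x (d y)) :
    Module.finrank ℂ D = (m + 1) * m :=
  finrank_derivations_general m D hD
end

section
/- For every symmetric cocycle h on J, the element h(e,e) lies in the Peirce component J_2 = ℂ·e; that is, the second component of h(e,e) ∈ ℂ × (Fin m → ℂ) is zero. -/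
/-- The idempotent `e = (1, 0)` of `J`. -/
def jE (m : ℕ) : ℂ × (Fin m → ℂ) := ((1 : ℂ), (0 : Fin m → ℂ))

/-- For every symmetric cocycle `h` on `J`, the element `h(e,e)` lies in the
Peirce component `J₂ = ℂ·e`, i.e. its second component vanishes. -/
theorem cocycle_h_e_e_in_J2 (m : ℕ) (hm : 1 ≤ m)
    (h : (ℂ × (Fin m → ℂ)) →ₗ[ℂ] (ℂ × (Fin m → ℂ)) →ₗ[ℂ] (ℂ × (Fin m → ℂ)))
    (hsymm : ∀ a b, h a b = h b a)
    (hcoc : ∀ a b,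
      jmul m (jmul m (h a a) b) a + jmul m (h (jmul m a a) b) a
          + h (jmul m (jmul m a a) b) a
        = jmul m (jmul m a a) (h b a) + jmul m (h a a) (jmul m b a)
          + h (jmul m a a) (jmul m b a)) :
    (h (jE m) (jE m)).2 = 0 := by
  have He : jmul m (jE m) (jE m) = jE m := by
    simp [jmul, jE]
  have H := hcoc (jE m) (jE m)
  rw [He] at H
  have H2 := congrArg Prod.snd H
  simp only [Prod.snd_add, jmul, jE] at H2
  funext i
  have H3 := congrFun H2 i
  simp at H3
  set v := (h ((1:ℂ), (0 : Fin m → ℂ)) ((1:ℂ), (0 : Fin m → ℂ))).2 i with hv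
  -- H3 should give a linear equation for v
  have hv0 : v = 0 := by linear_combination (-2 : ℂ) * H3
  simpa [jE] using hv0
end

section
/- For every symmetric cocycle h on J and all a, b in the Peirce component J_1 = {(x,v) ∈ J : x = 0}, the element h(a,b) also lies in J_1; that is, the first component of h(a,b) is zero. -/
/-!
On `J₁` the product vanishes identically, so the cocycle identity at `(a, e)` collapses to
`(h(a,a)∘e)∘a = h(a,a)∘(e∘a)`. Comparing second components gives `x·a/2 = x·a/4` for the
first component `x` of `h(a,a)`, hence `x = 0` whenever `a ≠ 0`. Polarizing the symmetric
bilinear map `(a, b) ↦ h(a,b).1` on `J₁` then gives the claim.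
-/

theorem LinearMap.eq_zero_of_symm_of_apply_self_eq_zero {R M N : Type*} [CommSemiring R]
    [AddCommMonoid M] [AddCommMonoid N] [IsAddTorsionFree N] [Module R M] [Module R N]
    (B : M →ₗ[R] M →ₗ[R] N) (hB : ∀ a b, B a b = B b a) (p : Submodule R M)
    (hdiag : ∀ a ∈ p, B a a = 0) {a b : M} (ha : a ∈ p) (hb : b ∈ p) : B a b = 0 := by
  have hsum := hdiag (a + b) (p.add_mem ha hb)
  simp only [map_add, LinearMap.add_apply, hdiag a ha, hdiag b hb, hB b a, zero_add,
    add_zero, ← two_nsmul] at hsum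
  exact (nsmul_eq_zero_iff_right two_ne_zero).mp hsum

namespace jmul

variable {m : ℕ}

@[simp]
theorem fst_apply (x y : ℂ × (Fin m → ℂ)) : (jmul m x y).1 = x.1 * y.1 := rfl

@[simp]
theorem snd_apply (x y : ℂ × (Fin m → ℂ)) :
    (jmul m x y).2 = (1 / 2 : ℂ) • (x.1 • y.2 + y.1 • x.2) := rfl

@[simp]
theorem zero_left (x : ℂ × (Fin m → ℂ)) : jmul m 0 x = 0 := by
  simp [Prod.ext_iff]

theorem self_eq_zero_of_fst_eq_zero {a : ℂ × (Fin m → ℂ)} (ha : a.1 = 0) : jmul m a a = 0 := by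
  simp [Prod.ext_iff, ha]

def IsCocycle (h : (ℂ × (Fin m → ℂ)) →ₗ[ℂ] (ℂ × (Fin m → ℂ)) →ₗ[ℂ] (ℂ × (Fin m → ℂ))) :
    Prop :=
  ∀ a b, jmul m (jmul m (h a a) b) a + jmul m (h (jmul m a a) b) a + h (jmul m (jmul m a a) b) a
    = jmul m (jmul m a a) (h b a) + jmul m (h a a) (jmul m b a) + h (jmul m a a) (jmul m b a)

variable {h : (ℂ × (Fin m → ℂ)) →ₗ[ℂ] (ℂ × (Fin m → ℂ)) →ₗ[ℂ] (ℂ × (Fin m → ℂ))}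

theorem fst_smul_snd_eq_zero_of_cocycle
    (hcoc : IsCocycle h) {a : ℂ × (Fin m → ℂ)} (ha : a.1 = 0) : (h a a).1 • a.2 = 0 := by
  have hc := hcoc a (jE m)
  rw [self_eq_zero_of_fst_eq_zero ha] at hc
  funext i
  have hci := congrFun (congrArg Prod.snd hc) i
  simp only [Prod.snd_add, Pi.add_apply, snd_apply, fst_apply, zero_left, map_zero,
    LinearMap.zero_apply, jE, ha, Prod.snd_zero, Pi.smul_apply, smul_eq_mul,
    Pi.zero_apply] at hci
  simp only [Pi.smul_apply, smul_eq_mul, Pi.zero_apply]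
  linear_combination 4 * hci

theorem fst_apply_self_eq_zero_of_cocycle
    (hcoc : IsCocycle h) {a : ℂ × (Fin m → ℂ)} (ha : a.1 = 0) : (h a a).1 = 0 := by
  by_cases ha₂ : a.2 = 0
  · simp [show a = 0 from Prod.ext ha ha₂]
  · exact (smul_eq_zero.mp (fst_smul_snd_eq_zero_of_cocycle hcoc ha)).resolve_right ha₂

end jmul

theorem cocycle_h_J1_J1_in_J1_general (m : ℕ)
    (h : (ℂ × (Fin m → ℂ)) →ₗ[ℂ] (ℂ × (Fin m → ℂ)) →ₗ[ℂ] (ℂ × (Fin m → ℂ)))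
    (hsymm : ∀ a b, h a b = h b a)
    (hcoc : ∀ a b,
      jmul m (jmul m (h a a) b) a + jmul m (h (jmul m a a) b) a
          + h (jmul m (jmul m a a) b) a
        = jmul m (jmul m a a) (h b a) + jmul m (h a a) (jmul m b a)
          + h (jmul m a a) (jmul m b a)) :
    ∀ a b : ℂ × (Fin m → ℂ), a.1 = 0 → b.1 = 0 → (h a b).1 = 0 := by
  intro a b ha hb
  let J₁ := LinearMap.ker (LinearMap.fst ℂ ℂ (Fin m → ℂ))
  have hdiag : ∀ c ∈ J₁, (h c c).1 = 0 := fun c hc =>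
    jmul.fst_apply_self_eq_zero_of_cocycle hcoc hc
  exact (h.compr₂ (LinearMap.fst ℂ ℂ (Fin m → ℂ))).eq_zero_of_symm_of_apply_self_eq_zero
    (fun c d => congrArg Prod.fst (hsymm c d)) J₁ hdiag ha hb

/-- For every symmetric cocycle `h` on `J` and all `a, b` in the Peirce
component `J₁ = {(x,v) : x = 0}`, the element `h(a,b)` also lies in `J₁`. -/
theorem cocycle_h_J1_J1_in_J1 (m : ℕ) (hm : 1 ≤ m)
    (h : (ℂ × (Fin m → ℂ)) →ₗ[ℂ] (ℂ × (Fin m → ℂ)) →ₗ[ℂ] (ℂ × (Fin m → ℂ)))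
    (hsymm : ∀ a b, h a b = h b a)
    (hcoc : ∀ a b,
      jmul m (jmul m (h a a) b) a + jmul m (h (jmul m a a) b) a
          + h (jmul m (jmul m a a) b) a
        = jmul m (jmul m a a) (h b a) + jmul m (h a a) (jmul m b a)
          + h (jmul m a a) (jmul m b a)) :
    ∀ a b : ℂ × (Fin m → ℂ), a.1 = 0 → b.1 = 0 → (h a b).1 = 0 :=
  cocycle_h_J1_J1_in_J1_general m h hsymm hcoc
end

section
/- For every symmetric cocycle h on J and every c in the Peirce component J_1 = {(x,v) ∈ J : x = 0}, one has h(e,e)∘c = π_1(h(e,c)), where π_1 : J → J is the projection (x,v) ↦ (0,v) onto J_1. -/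
/-- For every symmetric cocycle `h` on `J` and every `c ∈ J₁`,
`h(e,e)∘c = π₁(h(e,c))`, where `π₁ : (x,v) ↦ (0,v)` is the projection onto `J₁`. -/
theorem cocycle_h_e_e_mul (m : ℕ) (hm : 1 ≤ m)
    (h : (ℂ × (Fin m → ℂ)) →ₗ[ℂ] (ℂ × (Fin m → ℂ)) →ₗ[ℂ] (ℂ × (Fin m → ℂ)))
    (hsymm : ∀ a b, h a b = h b a)
    (hcoc : ∀ a b,
      jmul m (jmul m (h a a) b) a + jmul m (h (jmul m a a) b) a
          + h (jmul m (jmul m a a) b) a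
        = jmul m (jmul m a a) (h b a) + jmul m (h a a) (jmul m b a)
          + h (jmul m a a) (jmul m b a)) :
    ∀ c : ℂ × (Fin m → ℂ), c.1 = 0 →
      jmul m (h (jE m) (jE m)) c = ((0 : ℂ), (h (jE m) c).2) := by
  intro c hc
  have key : ∀ (d : ℂ × (Fin m → ℂ)) (s : ℂ), d = (s • c) →
      jmul m (jE m + d) (jE m + d) = jE m + d + (s * s) • jmul m c c ∧
      jmul m (jE m + d) (jE m) = jE m + (1/2 : ℂ) • d ∧
      jmul m (jE m) (jE m + d) = jE m + (1/2 : ℂ) • d := by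
    intro d s hd
    subst hd
    refine ⟨?_, ?_, ?_⟩ <;>
    · refine Prod.ext ?_ ?_
      · simp [jmul, jE, hc]
      · funext i; simp [jmul, jE, hc]; try ring
  have t1 : jmul m c c = 0 := by
    refine Prod.ext ?_ ?_ <;> simp [jmul, hc]
  have t2 : jmul m (jE m) c = (1/2 : ℂ) • c := by
    refine Prod.ext ?_ ?_ <;> simp [jmul, jE, hc]
  have t0 : ∀ x, jmul m (0 : ℂ × (Fin m → ℂ)) x = 0 := by
    intro x; refine Prod.ext ?_ ?_ <;> simp [jmul]
  obtain ⟨r1, r2, r3⟩ := key c 1 (by simp)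
  obtain ⟨s1, s2, s3⟩ := key (-c) (-1) (by simp)
  rw [t1, smul_zero, add_zero] at r1 s1
  have E1 := hcoc (jE m + c) (jE m)
  rw [r1, r2, r3] at E1
  have E2 := hcoc (jE m + -c) (jE m)
  rw [s1, s2, s3] at E2
  have E3 := hcoc c (jE m)
  rw [t1, t0, t0, t2, map_zero] at E3
  simp only [map_zero, LinearMap.zero_apply, add_zero, zero_add] at E3
  have hce : h c (jE m) = h (jE m) c := hsymm c (jE m)
  simp only [map_add, map_sub, map_neg, map_smul, LinearMap.add_apply, LinearMap.sub_apply,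
    LinearMap.neg_apply, LinearMap.smul_apply, hce] at E1 E2 E3
  have E1b := congrArg Prod.snd E1
  have E2b := congrArg Prod.snd E2
  have E3b := congrArg Prod.snd E3
  refine Prod.ext ?_ ?_
  · simp [jmul, jE, hc]
  · funext i
    have e1 := congrFun E1b i
    have e2 := congrFun E2b i
    have e3 := congrFun E3b i
    simp only [jmul, jE, hc, Prod.fst_add, Prod.snd_add, Prod.fst_sub, Prod.snd_sub,
      Prod.fst_neg, Prod.snd_neg, Prod.smul_fst, Prod.smul_snd, Prod.snd_zero, Prod.fst_zero,
      Pi.add_apply, Pi.sub_apply, Pi.neg_apply, Pi.smul_apply, Pi.zero_apply,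
      smul_eq_mul] at e1 e2 e3 ⊢
    linear_combination e1 - e2 - 2 * e3
end

section
/- For every symmetric cocycle h on J and all a, b in the Peirce component J_1 = {(x,v) ∈ J : x = 0}, one has h(a,b) = 2(π_2(h(a,e))∘b + π_2(h(b,e))∘a), where π_2 : J → J is the projection (x,v) ↦ (x,0) onto J_2 = ℂ·e. In particular h(a,a) = 4·π_2(h(a,e))∘a for a ∈ J_1. -/
/-- For every symmetric cocycle `h` on `J` and all `a, b ∈ J₁`,
`h(a,b) = 2(π₂(h(a,e))∘b + π₂(h(b,e))∘a)`, where `π₂ : (x,v) ↦ (x,0)` is the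
projection onto `J₂ = ℂ·e`; in particular `h(a,a) = 4·π₂(h(a,e))∘a` for `a ∈ J₁`. -/
theorem cocycle_h_J1_formula (m : ℕ) (hm : 1 ≤ m)
    (h : (ℂ × (Fin m → ℂ)) →ₗ[ℂ] (ℂ × (Fin m → ℂ)) →ₗ[ℂ] (ℂ × (Fin m → ℂ)))
    (hsymm : ∀ a b, h a b = h b a)
    (hcoc : ∀ a b,
      jmul m (jmul m (h a a) b) a + jmul m (h (jmul m a a) b) a
          + h (jmul m (jmul m a a) b) a
        = jmul m (jmul m a a) (h b a) + jmul m (h a a) (jmul m b a)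
          + h (jmul m a a) (jmul m b a)) :
    (∀ a b : ℂ × (Fin m → ℂ), a.1 = 0 → b.1 = 0 →
      h a b = (2 : ℂ) • (jmul m ((h a (jE m)).1, (0 : Fin m → ℂ)) b
        + jmul m ((h b (jE m)).1, (0 : Fin m → ℂ)) a)) ∧
    (∀ a : ℂ × (Fin m → ℂ), a.1 = 0 →
      h a a = (4 : ℂ) • jmul m ((h a (jE m)).1, (0 : Fin m → ℂ)) a) := by
  -- zero pair
  have hz : ((0:ℂ), (0 : Fin m → ℂ)) = (0 : ℂ × (Fin m → ℂ)) := rfl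
  -- Lemma 1 : (h a a).1 • v = 0 for a = (0,v)
  have L1 : ∀ (v : Fin m → ℂ) (i : Fin m),
      (h ((0:ℂ), v) ((0:ℂ), v)).1 * v i = 0 := by
    intro v i
    have H := hcoc ((0:ℂ), v) ((1:ℂ), (0 : Fin m → ℂ))
    simp only [jmul] at H
    simp only [mul_zero, zero_mul, one_mul, mul_one, smul_zero, zero_smul, one_smul,
      zero_add, add_zero, hz, map_zero, LinearMap.zero_apply] at H
    have H2 := congrFun (congrArg Prod.snd H) i
    simp only [Prod.snd_add, Prod.fst_add, Prod.smul_snd, Pi.add_apply, Pi.smul_apply,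
      smul_eq_mul, Pi.zero_apply, Prod.fst_zero, Prod.snd_zero] at H2
    linear_combination (4 : ℂ) * H2
  -- Lemma 2 : (h a a).2 = 2 (h a e).1 • v for a = (0,v)
  have L2 : ∀ (v : Fin m → ℂ) (i : Fin m),
      (h ((0:ℂ), v) ((0:ℂ), v)).2 i
        = 2 * (h ((0:ℂ), v) ((1:ℂ), (0 : Fin m → ℂ))).1 * v i := by
    intro v i
    have dec : ∀ (x s : ℂ), ((x, s • v) : ℂ × (Fin m → ℂ))
        = x • ((1:ℂ), (0:Fin m → ℂ)) + s • ((0:ℂ), v) := by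
      intro x s; ext <;> simp
    have key : ∀ (x s : ℂ) (z : ℂ × (Fin m → ℂ)),
        h (x, s • v) z = x • h ((1:ℂ), (0:Fin m → ℂ)) z + s • h ((0:ℂ), v) z := by
      intro x s z; rw [dec, map_add, map_smul, map_smul]; rfl
    have key2 : ∀ (z : ℂ × (Fin m → ℂ)) (x s : ℂ),
        h z (x, s • v) = x • h z ((1:ℂ), (0:Fin m → ℂ)) + s • h z ((0:ℂ), v) := by
      intro z x s; rw [dec, map_add, map_smul, map_smul]
    have hs : h ((1:ℂ), (0:Fin m → ℂ)) ((0:ℂ), v)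
        = h ((0:ℂ), v) ((1:ℂ), (0:Fin m → ℂ)) := hsymm _ _
    have G := fun t : ℂ => hcoc ((1:ℂ), t • v) ((1:ℂ), (0 : Fin m → ℂ))
    simp only [jmul] at G
    simp only [one_mul, mul_one, smul_zero, one_smul, zero_add, add_zero, smul_smul,
      ← add_smul] at G
    simp only [key, key2, hs, map_add, map_smul, LinearMap.add_apply, LinearMap.smul_apply,
      one_smul, smul_add, smul_smul, Prod.smul_mk, Prod.mk_add_mk] at G
    have Gs := fun t : ℂ => congrFun (congrArg Prod.snd (G t)) i
    simp only [Prod.snd_add, Prod.fst_add, Prod.smul_snd, Prod.smul_fst, Pi.add_apply,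
      Pi.smul_apply, smul_eq_mul, Pi.zero_apply, Prod.fst_zero, Prod.snd_zero] at Gs
    have g1 := Gs 1
    have g2 := Gs (-1)
    have g0 := Gs 0
    linear_combination (-2 : ℂ) * g1 + (-2:ℂ) * g2 + (4:ℂ) * g0
  -- linearity expansions on J1
  have hadd : ∀ (v w : Fin m → ℂ) (z : ℂ × (Fin m → ℂ)),
      h ((0:ℂ), v + w) z = h ((0:ℂ), v) z + h ((0:ℂ), w) z := by
    intro v w z
    have : ((0:ℂ), v + w) = ((0:ℂ), v) + ((0:ℂ), w) := by ext <;> simp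
    rw [this, map_add]; rfl
  have hadd2 : ∀ (v w : Fin m → ℂ) (z : ℂ × (Fin m → ℂ)),
      h z ((0:ℂ), v + w) = h z ((0:ℂ), v) + h z ((0:ℂ), w) := by
    intro v w z
    have : ((0:ℂ), v + w) = ((0:ℂ), v) + ((0:ℂ), w) := by ext <;> simp
    rw [this, map_add]
  have hneg : ∀ (v : Fin m → ℂ) (z : ℂ × (Fin m → ℂ)),
      h ((0:ℂ), -v) z = - h ((0:ℂ), v) z := by
    intro v z
    have : ((0:ℂ), -v) = - ((0:ℂ), v) := by ext <;> simp
    rw [this, map_neg]; rfl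
  have hneg2 : ∀ (v : Fin m → ℂ) (z : ℂ × (Fin m → ℂ)),
      h z ((0:ℂ), -v) = - h z ((0:ℂ), v) := by
    intro v z
    have : ((0:ℂ), -v) = - ((0:ℂ), v) := by ext <;> simp
    rw [this, map_neg]
  -- scalar part vanishes
  have Lr1 : ∀ (v w : Fin m → ℂ), v ≠ 0 → w ≠ 0 →
      (h ((0:ℂ), v) ((0:ℂ), w)).1 = 0 := by
    intro v w hv hw
    obtain ⟨i, hi⟩ : ∃ i, v i ≠ 0 := by
      by_contra hc; push_neg at hc; exact hv (funext hc)
    obtain ⟨j, hj⟩ : ∃ j, w j ≠ 0 := by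
      by_contra hc; push_neg at hc; exact hw (funext hc)
    have hsym' : h ((0:ℂ), w) ((0:ℂ), v) = h ((0:ℂ), v) ((0:ℂ), w) := hsymm _ _
    have hA : (h ((0:ℂ), v) ((0:ℂ), v)).1 = 0 := by
      rcases mul_eq_zero.1 (L1 v i) with h' | h'
      · exact h'
      · exact absurd h' hi
    have hB : (h ((0:ℂ), w) ((0:ℂ), w)).1 = 0 := by
      rcases mul_eq_zero.1 (L1 w j) with h' | h'
      · exact h'
      · exact absurd h' hj
    have h1 := L1 (v + w) i
    have h2 := L1 (v + -w) i
    simp only [hadd, hadd2, hneg, hneg2, hsym', Prod.fst_add, Prod.fst_neg, Pi.add_apply,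
      Pi.neg_apply] at h1 h2
    have hr : (h ((0:ℂ), v) ((0:ℂ), w)).1 * v i = 0 := by
      linear_combination (1/4 : ℂ) * h1 - (1/4 : ℂ) * h2
        - (w i / 2) * hA - (w i / 2) * hB
    rcases mul_eq_zero.1 hr with h' | h'
    · exact h'
    · exact absurd h' hi
  -- vector part formula
  have Lr2 : ∀ (v w : Fin m → ℂ) (i : Fin m),
      (h ((0:ℂ), v) ((0:ℂ), w)).2 i
        = (h ((0:ℂ), v) ((1:ℂ), (0 : Fin m → ℂ))).1 * w i
          + (h ((0:ℂ), w) ((1:ℂ), (0 : Fin m → ℂ))).1 * v i := by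
    intro v w i
    have hsym' : h ((0:ℂ), w) ((0:ℂ), v) = h ((0:ℂ), v) ((0:ℂ), w) := hsymm _ _
    have h1 := L2 (v + w) i
    have h2 := L2 v i
    have h3 := L2 w i
    simp only [hadd, hadd2, hsym', Prod.fst_add, Prod.snd_add, Pi.add_apply] at h1
    linear_combination (1/2 : ℂ) * h1 - (1/2 : ℂ) * h2 - (1/2 : ℂ) * h3
  -- main formula
  have main : ∀ a b : ℂ × (Fin m → ℂ), a.1 = 0 → b.1 = 0 →
      h a b = (2 : ℂ) • (jmul m ((h a (jE m)).1, (0 : Fin m → ℂ)) b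
        + jmul m ((h b (jE m)).1, (0 : Fin m → ℂ)) a) := by
    intro a b ha hb
    have ea : a = ((0:ℂ), a.2) := Prod.ext ha rfl
    have eb : b = ((0:ℂ), b.2) := Prod.ext hb rfl
    rw [ea, eb]
    by_cases hv : a.2 = 0
    · rw [hv, hz]
      simp [jmul, jE, hz]
    · by_cases hw : b.2 = 0
      · rw [hw, hz]
        simp [jmul, jE, hz]
      · refine Prod.ext ?_ (funext fun i => ?_)
        · have := Lr1 a.2 b.2 hv hw
          simp only [jmul, jE, Prod.smul_fst, Prod.fst_add, smul_eq_mul]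
          simp [this]
        · have := Lr2 a.2 b.2 i
          simp only [jmul, jE] at this ⊢
          simp only [Prod.smul_snd, Prod.snd_add, Pi.add_apply, Pi.smul_apply, smul_eq_mul,
            Prod.smul_fst, Prod.fst_add, Pi.zero_apply, smul_zero, zero_add, add_zero,
            zero_smul, one_smul, mul_zero, zero_mul] at this ⊢
          linear_combination this
  refine ⟨main, fun a ha => ?_⟩
  rw [main a a ha ha]
  have : ∀ X : ℂ × (Fin m → ℂ), (2:ℂ) • (X + X) = (4:ℂ) • X := by
    intro X
    rw [smul_add, ← add_smul]; norm_num
  exact this _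
end

section
/- Degeneration T_03 → T_09: let μ be the commutative bilinear product on ℂ³ with u₁∘u₁ = u₁, u₂∘u₂ = u₂, u₁∘u₃ = u₃ and all other products of basis vectors zero, and let λ be the commutative bilinear product with u₁∘u₁ = u₁, u₁∘u₂ = u₂ and all other products of basis vectors zero. Then λ lies in the closure of the orbit {g·μ : g ∈ GL(3,ℂ)} in the space of bilinear maps ℂ³ × ℂ³ → ℂ³ with its standard topology. -/
open Matrix

/-- The bilinear product on `ℂ³` determined by structure constants `c`:
`(x ∘ y) k = ∑ i j, x i * y j * c i j k`. -/
noncomputable def bilOf (c : Fin 3 → Fin 3 → Fin 3 → ℂ) (x y : Fin 3 → ℂ) : Fin 3 → ℂ :=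
  fun k => ∑ i, ∑ j, x i * y j * c i j k

/-- The action of `g ∈ GL(3,ℂ)` on structure constants, corresponding to the
action `(g·μ)(x,y) = g(μ(g⁻¹x, g⁻¹y))` on bilinear maps: `(act g c) i j` is the
coordinate vector of `(g·μ)(uᵢ, uⱼ)` in the standard basis `u₁, u₂, u₃`. -/
noncomputable def act (g : GL (Fin 3) ℂ) (c : Fin 3 → Fin 3 → Fin 3 → ℂ) :
    Fin 3 → Fin 3 → Fin 3 → ℂ :=
  fun i j => (g : Matrix (Fin 3) (Fin 3) ℂ).mulVec
    (bilOf c (((g⁻¹ : GL (Fin 3) ℂ) : Matrix (Fin 3) (Fin 3) ℂ).mulVec (Pi.single i 1))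
             (((g⁻¹ : GL (Fin 3) ℂ) : Matrix (Fin 3) (Fin 3) ℂ).mulVec (Pi.single j 1)))

/-! Let `g_t` be the linear map with `g_t⁻¹ : u₁ ↦ u₁, u₂ ↦ t u₃, u₃ ↦ t u₂`. Transporting μ by
`g_t` gives `u₁∘u₁ = u₁`, `u₁∘u₂ = u₂`, `u₃∘u₃ = t u₃`, i.e. `λ + t δ` where `δ` is the product
with `u₃∘u₃ = u₃` as its only nonzero entry. This depends continuously on `t` and equals `λ` at
`t = 0`, so `λ` is a limit of points of the orbit. -/

open Filter Topology

lemma mem_closure_of_continuousAt_of_forall_ne {α X : Type*} [TopologicalSpace α]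
    [TopologicalSpace X] {f : α → X} {a : α} [(𝓝[≠] a).NeBot] {s : Set X}
    (hf : ContinuousAt f a) (hs : ∀ t ≠ a, f t ∈ s) : f a ∈ closure s :=
  mem_closure_of_tendsto (hf.tendsto.mono_left nhdsWithin_le_nhds)
    (eventually_nhdsWithin_of_forall (s := {a}ᶜ) hs)

noncomputable def swapScale (t : ℂ) : Matrix (Fin 3) (Fin 3) ℂ :=
  !![1, 0, 0; 0, 0, t; 0, t, 0]

lemma swapScale_mul_swapScale {t s : ℂ} (h : t * s = 1) : swapScale t * swapScale s = 1 := by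
  ext i j
  fin_cases i <;> fin_cases j <;> simp [swapScale, Matrix.mul_apply, Fin.sum_univ_three, h]

/-- `g_t` above; its inverse is `swapScale t`. -/
noncomputable def swapScaleGL {t : ℂ} (ht : t ≠ 0) : GL (Fin 3) ℂ :=
  ⟨swapScale t⁻¹, swapScale t, swapScale_mul_swapScale (inv_mul_cancel₀ ht),
    swapScale_mul_swapScale (mul_inv_cancel₀ ht)⟩

noncomputable def structT03 : Fin 3 → Fin 3 → Fin 3 → ℂ :=
  ![![![1, 0, 0], ![0, 0, 0], ![0, 0, 1]],
    ![![0, 0, 0], ![0, 1, 0], ![0, 0, 0]],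
    ![![0, 0, 1], ![0, 0, 0], ![0, 0, 0]]]

noncomputable def structT09 : Fin 3 → Fin 3 → Fin 3 → ℂ :=
  ![![![1, 0, 0], ![0, 1, 0], ![0, 0, 0]],
    ![![0, 1, 0], ![0, 0, 0], ![0, 0, 0]],
    ![![0, 0, 0], ![0, 0, 0], ![0, 0, 0]]]

noncomputable def structIdemThree : Fin 3 → Fin 3 → Fin 3 → ℂ :=
  fun i j k => if i = 2 ∧ j = 2 ∧ k = 2 then 1 else 0

lemma act_swapScaleGL_structT03 {t : ℂ} (ht : t ≠ 0) :
    act (swapScaleGL ht) structT03 = structT09 + t • structIdemThree := by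
  funext i j k
  fin_cases i <;> fin_cases j <;> fin_cases k <;>
    simp [act, swapScaleGL, bilOf, structT03, structT09, structIdemThree, swapScale,
      Matrix.mulVec, dotProduct, Fin.sum_univ_three, Pi.single_apply] <;>
    field_simp

/-- Degeneration T_03 → T_09: here μ is u₁∘u₁ = u₁, u₂∘u₂ = u₂, u₁∘u₃ = u₃ and λ is u₁∘u₁ = u₁, u₁∘u₂ = u₂; λ lies in the closure of the GL(3,ℂ)-orbit of μ. -/
theorem degeneration_T03_T09 :
    (![![![(1:ℂ),0,0],![(0:ℂ),1,0],![(0:ℂ),0,0]],![![(0:ℂ),1,0],![(0:ℂ),0,0],![(0:ℂ),0,0]],![![(0:ℂ),0,0],![(0:ℂ),0,0],![(0:ℂ),0,0]]] : Fin 3 → Fin 3 → Fin 3 → ℂ)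
      ∈ closure {c : Fin 3 → Fin 3 → Fin 3 → ℂ |
          ∃ g : GL (Fin 3) ℂ, c = act g (![![![(1:ℂ),0,0],![(0:ℂ),0,0],![(0:ℂ),0,1]],![![(0:ℂ),0,0],![(0:ℂ),1,0],![(0:ℂ),0,0]],![![(0:ℂ),0,1],![(0:ℂ),0,0],![(0:ℂ),0,0]]] : Fin 3 → Fin 3 → Fin 3 → ℂ)} := by
  have hcont : Continuous fun t : ℂ => structT09 + t • structIdemThree := by fun_prop
  have hmem : ∀ t : ℂ, t ≠ 0 → structT09 + t • structIdemThree ∈ {c | ∃ g, c = act g structT03} :=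
    fun t ht => ⟨swapScaleGL ht, (act_swapScaleGL_structT03 ht).symm⟩
  have hlim := mem_closure_of_continuousAt_of_forall_ne hcont.continuousAt hmem
  rwa [zero_smul, add_zero] at hlim
end

section
/- Degeneration T_08 → T_19: let μ be the commutative bilinear product on ℂ³ with u₁∘u₁ = u₁, u₁∘u₂ = u₂, u₁∘u₃ = u₃ and all other products of basis vectors zero, and let λ be the commutative bilinear product with u₁∘u₁ = u₂ and all other products of basis vectors zero. Then λ lies in the closure of the orbit {g·μ : g ∈ GL(3,ℂ)} in the space of bilinear maps ℂ³ × ℂ³ → ℂ³ with its standard topology. -/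
open Matrix

noncomputable def muT08 : Fin 3 → Fin 3 → Fin 3 → ℂ :=
  ![![![(1:ℂ),0,0],![(0:ℂ),1,0],![(0:ℂ),0,1]],![![(0:ℂ),1,0],![(0:ℂ),0,0],![(0:ℂ),0,0]],![![(0:ℂ),0,1],![(0:ℂ),0,0],![(0:ℂ),0,0]]]

lemma bilOf_mu (x y : Fin 3 → ℂ) :
    bilOf muT08 x y = ![x 0 * y 0, x 0 * y 1 + x 1 * y 0, x 0 * y 2 + x 2 * y 0] := by
  funext k
  fin_cases k <;> simp [bilOf, muT08, Fin.sum_univ_succ]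

noncomputable def Amat (t : ℂ) : Matrix (Fin 3) (Fin 3) ℂ := !![t, t^2, 0; 1, 2*t, 0; 0, 0, 1]
noncomputable def Bmat (t : ℂ) : Matrix (Fin 3) (Fin 3) ℂ := !![2/t, -1, 0; -1/t^2, 1/t, 0; 0, 0, 1]

lemma mulVec3 (M : Matrix (Fin 3) (Fin 3) ℂ) (v : Fin 3 → ℂ) :
    M.mulVec v = ![M 0 0 * v 0 + M 0 1 * v 1 + M 0 2 * v 2,
                   M 1 0 * v 0 + M 1 1 * v 1 + M 1 2 * v 2,
                   M 2 0 * v 0 + M 2 1 * v 1 + M 2 2 * v 2] := by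
  funext k
  fin_cases k <;> simp [Matrix.mulVec, dotProduct, Fin.sum_univ_succ] <;> ring

lemma A_col0 (t : ℂ) : (Amat t).mulVec (Pi.single 0 1) = ![t, 1, 0] := by
  rw [mulVec3]; simp [Amat]
lemma A_col1 (t : ℂ) : (Amat t).mulVec (Pi.single 1 1) = ![t^2, 2*t, 0] := by
  rw [mulVec3]; simp [Amat]
lemma A_col2 (t : ℂ) : (Amat t).mulVec (Pi.single 2 1) = ![0, 0, 1] := by
  rw [mulVec3]; simp [Amat]

lemma hBA (t : ℂ) (ht : t ≠ 0) : Bmat t * Amat t = 1 := by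
  ext i j
  fin_cases i <;> fin_cases j <;>
    simp [Bmat, Amat, Matrix.mul_apply, Fin.sum_univ_succ] <;> field_simp <;> ring

lemma hAB (t : ℂ) (ht : t ≠ 0) : Amat t * Bmat t = 1 := by
  ext i j
  fin_cases i <;> fin_cases j <;>
    simp [Bmat, Amat, Matrix.mul_apply, Fin.sum_univ_succ] <;> field_simp <;> ring

noncomputable def gmat (t : ℂ) (ht : t ≠ 0) : GL (Fin 3) ℂ :=
  ⟨Bmat t, Amat t, hBA t ht, hAB t ht⟩

/-- The curve of structure constants. -/
noncomputable def Cfam (t : ℂ) : Fin 3 → Fin 3 → Fin 3 → ℂ :=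
  ![![![0,1,0], ![-t^2, 2*t, 0], ![0,0,t]],
    ![![-t^2, 2*t, 0], ![-2*t^3, 3*t^2, 0], ![0,0,t^2]],
    ![![0,0,t], ![0,0,t^2], ![0,0,0]]]

lemma B00 (t : ℂ) (ht : t ≠ 0) :
    (Bmat t).mulVec (bilOf muT08 ![t,1,0] ![t,1,0]) = ![0,1,0] := by
  rw [bilOf_mu, mulVec3]; funext k
  fin_cases k <;> simp [Bmat] <;> field_simp <;> ring
lemma B01 (t : ℂ) (ht : t ≠ 0) :
    (Bmat t).mulVec (bilOf muT08 ![t,1,0] ![t^2,2*t,0]) = ![-t^2, 2*t, 0] := by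
  rw [bilOf_mu, mulVec3]; funext k
  fin_cases k <;> simp [Bmat] <;> field_simp <;> ring
lemma B10 (t : ℂ) (ht : t ≠ 0) :
    (Bmat t).mulVec (bilOf muT08 ![t^2,2*t,0] ![t,1,0]) = ![-t^2, 2*t, 0] := by
  rw [bilOf_mu, mulVec3]; funext k
  fin_cases k <;> simp [Bmat] <;> field_simp <;> ring
lemma B02 (t : ℂ) (ht : t ≠ 0) :
    (Bmat t).mulVec (bilOf muT08 ![t,1,0] ![0,0,1]) = ![0,0,t] := by
  rw [bilOf_mu, mulVec3]; funext k
  fin_cases k <;> simp [Bmat] <;> field_simp <;> ring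
lemma B20 (t : ℂ) (ht : t ≠ 0) :
    (Bmat t).mulVec (bilOf muT08 ![0,0,1] ![t,1,0]) = ![0,0,t] := by
  rw [bilOf_mu, mulVec3]; funext k
  fin_cases k <;> simp [Bmat] <;> field_simp <;> ring
lemma B11 (t : ℂ) (ht : t ≠ 0) :
    (Bmat t).mulVec (bilOf muT08 ![t^2,2*t,0] ![t^2,2*t,0]) = ![-2*t^3, 3*t^2, 0] := by
  rw [bilOf_mu, mulVec3]; funext k
  fin_cases k <;> simp [Bmat] <;> field_simp <;> ring
lemma B12 (t : ℂ) (ht : t ≠ 0) :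
    (Bmat t).mulVec (bilOf muT08 ![t^2,2*t,0] ![0,0,1]) = ![0,0,t^2] := by
  rw [bilOf_mu, mulVec3]; funext k
  fin_cases k <;> simp [Bmat] <;> field_simp <;> ring
lemma B21 (t : ℂ) (ht : t ≠ 0) :
    (Bmat t).mulVec (bilOf muT08 ![0,0,1] ![t^2,2*t,0]) = ![0,0,t^2] := by
  rw [bilOf_mu, mulVec3]; funext k
  fin_cases k <;> simp [Bmat] <;> field_simp <;> ring
lemma B22 (t : ℂ) (ht : t ≠ 0) :
    (Bmat t).mulVec (bilOf muT08 ![0,0,1] ![0,0,1]) = ![0,0,0] := by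
  rw [bilOf_mu, mulVec3]; funext k
  fin_cases k <;> simp [Bmat]

lemma key (t : ℂ) (ht : t ≠ 0) : act (gmat t ht) muT08 = Cfam t := by
  funext i j
  fin_cases i <;> fin_cases j
  · show (Bmat t).mulVec (bilOf muT08 ((Amat t).mulVec (Pi.single 0 1))
        ((Amat t).mulVec (Pi.single 0 1))) = _
    rw [A_col0, B00 t ht]; rfl
  · show (Bmat t).mulVec (bilOf muT08 ((Amat t).mulVec (Pi.single 0 1))
        ((Amat t).mulVec (Pi.single 1 1))) = _
    rw [A_col0, A_col1, B01 t ht]; rfl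
  · show (Bmat t).mulVec (bilOf muT08 ((Amat t).mulVec (Pi.single 0 1))
        ((Amat t).mulVec (Pi.single 2 1))) = _
    rw [A_col0, A_col2, B02 t ht]; rfl
  · show (Bmat t).mulVec (bilOf muT08 ((Amat t).mulVec (Pi.single 1 1))
        ((Amat t).mulVec (Pi.single 0 1))) = _
    rw [A_col0, A_col1, B10 t ht]; rfl
  · show (Bmat t).mulVec (bilOf muT08 ((Amat t).mulVec (Pi.single 1 1))
        ((Amat t).mulVec (Pi.single 1 1))) = _
    rw [A_col1, B11 t ht]; rfl
  · show (Bmat t).mulVec (bilOf muT08 ((Amat t).mulVec (Pi.single 1 1))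
        ((Amat t).mulVec (Pi.single 2 1))) = _
    rw [A_col1, A_col2, B12 t ht]; rfl
  · show (Bmat t).mulVec (bilOf muT08 ((Amat t).mulVec (Pi.single 2 1))
        ((Amat t).mulVec (Pi.single 0 1))) = _
    rw [A_col0, A_col2, B20 t ht]; rfl
  · show (Bmat t).mulVec (bilOf muT08 ((Amat t).mulVec (Pi.single 2 1))
        ((Amat t).mulVec (Pi.single 1 1))) = _
    rw [A_col1, A_col2, B21 t ht]; rfl
  · show (Bmat t).mulVec (bilOf muT08 ((Amat t).mulVec (Pi.single 2 1))
        ((Amat t).mulVec (Pi.single 2 1))) = _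
    rw [A_col2, B22 t ht]; rfl

lemma Cfam_cont : Continuous Cfam := by
  refine continuous_pi fun i => continuous_pi fun j => continuous_pi fun k => ?_
  fin_cases i <;> fin_cases j <;> fin_cases k <;> simp only [Cfam] <;>
    simp <;> fun_prop

lemma Cfam_zero :
    Cfam 0 = (![![![(0:ℂ),1,0],![(0:ℂ),0,0],![(0:ℂ),0,0]],![![(0:ℂ),0,0],![(0:ℂ),0,0],![(0:ℂ),0,0]],![![(0:ℂ),0,0],![(0:ℂ),0,0],![(0:ℂ),0,0]]] : Fin 3 → Fin 3 → Fin 3 → ℂ) := by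
  funext i j k
  fin_cases i <;> fin_cases j <;> fin_cases k <;> norm_num [Cfam]

/-- Degeneration T_08 → T_19: here μ is u₁∘u₁ = u₁, u₁∘u₂ = u₂, u₁∘u₃ = u₃ and λ is u₁∘u₁ = u₂; λ lies in the closure of the GL(3,ℂ)-orbit of μ. -/
theorem degeneration_T08_T19 :
    (![![![(0:ℂ),1,0],![(0:ℂ),0,0],![(0:ℂ),0,0]],![![(0:ℂ),0,0],![(0:ℂ),0,0],![(0:ℂ),0,0]],![![(0:ℂ),0,0],![(0:ℂ),0,0],![(0:ℂ),0,0]]] : Fin 3 → Fin 3 → Fin 3 → ℂ)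
      ∈ closure {c : Fin 3 → Fin 3 → Fin 3 → ℂ |
          ∃ g : GL (Fin 3) ℂ, c = act g (![![![(1:ℂ),0,0],![(0:ℂ),1,0],![(0:ℂ),0,1]],![![(0:ℂ),1,0],![(0:ℂ),0,0],![(0:ℂ),0,0]],![![(0:ℂ),0,1],![(0:ℂ),0,0],![(0:ℂ),0,0]]] : Fin 3 → Fin 3 → Fin 3 → ℂ)} := by
  have htend : Filter.Tendsto Cfam (nhdsWithin (0:ℂ) {0}ᶜ)
      (nhds (![![![(0:ℂ),1,0],![(0:ℂ),0,0],![(0:ℂ),0,0]],![![(0:ℂ),0,0],![(0:ℂ),0,0],![(0:ℂ),0,0]],![![(0:ℂ),0,0],![(0:ℂ),0,0],![(0:ℂ),0,0]]] : Fin 3 → Fin 3 → Fin 3 → ℂ)) := by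
    rw [← Cfam_zero]
    exact (Cfam_cont.tendsto 0).mono_left nhdsWithin_le_nhds
  refine mem_closure_of_tendsto htend ?_
  filter_upwards [self_mem_nhdsWithin] with t ht
  exact ⟨gmat t ht, (key t ht).symm⟩
end

section
/- Degeneration T_14 → T_18: let μ be the commutative bilinear product on ℂ³ with u₁∘u₁ = u₁, u₁∘u₂ = (1/2)u₂ and all other products of basis vectors zero, and let λ be the commutative bilinear product with u₁∘u₂ = u₃ and all other products of basis vectors zero. Then λ lies in the closure of the orbit {g·μ : g ∈ GL(3,ℂ)} in the space of bilinear maps ℂ³ × ℂ³ → ℂ³ with its standard topology. -/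
open Matrix

open Topology

theorem ContinuousAt.mem_closure_of_forall_ne {α X : Type*} [TopologicalSpace α]
    [TopologicalSpace X] {f : α → X} {a : α} [(𝓝[≠] a).NeBot] (hf : ContinuousAt f a)
    {S : Set X} (h : ∀ t ≠ a, f t ∈ S) : f a ∈ closure S :=
  mem_closure_of_tendsto (b := 𝓝[≠] a) (hf.tendsto.mono_left nhdsWithin_le_nhds)
    (eventually_nhdsWithin_of_forall h)

theorem act_apply (g : GL (Fin 3) ℂ) (c : Fin 3 → Fin 3 → Fin 3 → ℂ) (i j k : Fin 3) :
    act g c i j k = ∑ l, (g : Matrix (Fin 3) (Fin 3) ℂ) k l *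
      ∑ p, ∑ q, (↑g⁻¹ : Matrix (Fin 3) (Fin 3) ℂ) p i * (↑g⁻¹ : Matrix (Fin 3) (Fin 3) ℂ) q j *
        c p q l := by
  simp only [act, mulVec_single, MulOpposite.op_one, one_smul]
  rfl

noncomputable def T14 : Fin 3 → Fin 3 → Fin 3 → ℂ :=
  ![![![1, 0, 0], ![0, 1/2, 0], ![0, 0, 0]], ![![0, 1/2, 0], ![0, 0, 0], ![0, 0, 0]],
    ![![0, 0, 0], ![0, 0, 0], ![0, 0, 0]]]

noncomputable def T18 : Fin 3 → Fin 3 → Fin 3 → ℂ :=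
  ![![![0, 0, 0], ![0, 0, 1], ![0, 0, 0]], ![![0, 0, 1], ![0, 0, 0], ![0, 0, 0]],
    ![![0, 0, 0], ![0, 0, 0], ![0, 0, 0]]]

/-- The columns `e₁ = t u₁, e₂ = u₂ + u₃, e₃ = -(t/2) u₃` form a basis in which the `T14`
product reads `e₁e₁ = t e₁, e₁e₂ = (t/2) e₂ + e₃`. -/
noncomputable def basisChange (t : ℂ) : Matrix (Fin 3) (Fin 3) ℂ :=
  !![t, 0, 0; 0, 1, 0; 0, 1, -t / 2]

noncomputable def basisChangeInv (t : ℂ) : Matrix (Fin 3) (Fin 3) ℂ :=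
  !![t⁻¹, 0, 0; 0, 1, 0; 0, 2 * t⁻¹, -2 * t⁻¹]

theorem basisChangeInv_mul_basisChange {t : ℂ} (ht : t ≠ 0) :
    basisChangeInv t * basisChange t = 1 := by
  rw [basisChangeInv, basisChange, Matrix.mul_fin_three, Matrix.one_fin_three]
  field_simp
  simp [ht]

noncomputable def degenerationGL {t : ℂ} (ht : t ≠ 0) : GL (Fin 3) ℂ :=
  ⟨basisChangeInv t, basisChange t, basisChangeInv_mul_basisChange ht,
    mul_eq_one_comm.mp (basisChangeInv_mul_basisChange ht)⟩

theorem act_degenerationGL_T14 {t : ℂ} (ht : t ≠ 0) :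
    act (degenerationGL ht) T14 = T18 + t • T14 := by
  funext i j k
  rw [act_apply]
  fin_cases i <;> fin_cases j <;> fin_cases k <;>
    simp [degenerationGL, basisChange, basisChangeInv, T14, T18, Fin.sum_univ_three] <;>
    field_simp

/-- Degeneration T_14 → T_18: here μ is u₁∘u₁ = u₁, u₁∘u₂ = (1/2)u₂ and λ is u₁∘u₂ = u₃; λ lies in the closure of the GL(3,ℂ)-orbit of μ. -/
theorem degeneration_T14_T18 :
    (![![![(0:ℂ),0,0],![(0:ℂ),0,1],![(0:ℂ),0,0]],![![(0:ℂ),0,1],![(0:ℂ),0,0],![(0:ℂ),0,0]],![![(0:ℂ),0,0],![(0:ℂ),0,0],![(0:ℂ),0,0]]] : Fin 3 → Fin 3 → Fin 3 → ℂ)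
      ∈ closure {c : Fin 3 → Fin 3 → Fin 3 → ℂ |
          ∃ g : GL (Fin 3) ℂ, c = act g (![![![(1:ℂ),0,0],![(0:ℂ),1/2,0],![(0:ℂ),0,0]],![![(0:ℂ),1/2,0],![(0:ℂ),0,0],![(0:ℂ),0,0]],![![(0:ℂ),0,0],![(0:ℂ),0,0],![(0:ℂ),0,0]]] : Fin 3 → Fin 3 → Fin 3 → ℂ)} := by
  change T18 ∈ closure {c | ∃ g : GL (Fin 3) ℂ, c = act g T14}
  have hcurve : Continuous fun t : ℂ => T18 + t • T14 := by fun_prop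
  simpa using hcurve.continuousAt.mem_closure_of_forall_ne (a := 0)
    (S := {c | ∃ g : GL (Fin 3) ℂ, c = act g T14})
    fun t ht => ⟨degenerationGL ht, (act_degenerationGL_T14 ht).symm⟩
end
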